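/- arXiv:2602.14536 — 2 statements merged into one kernel-verified Lean document; each statement's English description precedes it below -/
import Mathlib

section
/- Strict alignment improvement under incoherent noise: in the setting of the exact alignment-gain formula, if additionally 0 < ε < 1, α + β < 1, g_core ≠ 0, and ⟨g_core, g_noise⟩_{M^{-1}} ≤ ζ ‖g_core‖²_{M^{-1}} for some ζ < 1, then A_fil − A_train ≥ (ab(1−α−β)(1−ζ)/Z_fil) ‖g_core‖²_{M^{-1}} > 0. -/
/-! Since `a + b = 1`, the gain `A_fil − A_train` factors exactly as
`ab(1−α−β)/Z_fil · (‖g_core‖²_{M⁻¹} − ⟨g_core, g_noise⟩_{M⁻¹})`, and the incoherence bound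
makes the last factor at least `(1−ζ)‖g_core‖²_{M⁻¹}`, which is positive because `M⁻¹` is
positive definite. -/

open Matrix

theorem Matrix.PosDef.dotProduct_inv_mulVec_pos {n : Type*} [Fintype n] [DecidableEq n]
    {M : Matrix n n ℝ} (hM : M.PosDef) {x : n → ℝ} (hx : x ≠ 0) :
    0 < x ⬝ᵥ M⁻¹ *ᵥ x := by
  simpa using hM.inv.dotProduct_mulVec_pos hx

theorem reweighted_sub_mixture_eq {a b α β Z Q P : ℝ} (hab : a + b = 1) (hZ : Z ≠ 0)
    (hZdef : Z = a * (1 - α) + b * β) :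
    (a * (1 - α) / Z) * Q + (b * β / Z) * P - (a * Q + b * P)
      = (a * b * (1 - α - β) / Z) * (Q - P) := by
  rw [eq_sub_of_add_eq hab] at hZdef ⊢
  field_simp
  rw [hZdef]
  ring

theorem le_reweighted_sub_mixture {a b α β ζ Z Q P : ℝ} (hab : a + b = 1) (ha : 0 ≤ a)
    (hb : 0 ≤ b) (hαβ : α + β ≤ 1) (hZ : 0 < Z) (hZdef : Z = a * (1 - α) + b * β)
    (hcoh : P ≤ ζ * Q) :
    (a * b * (1 - α - β) * (1 - ζ) / Z) * Q
      ≤ (a * (1 - α) / Z) * Q + (b * β / Z) * P - (a * Q + b * P) := by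
  rw [reweighted_sub_mixture_eq hab hZ.ne' hZdef]
  have hc : 0 ≤ a * b * (1 - α - β) / Z := by
    have : 0 ≤ 1 - α - β := by linarith
    positivity
  calc a * b * (1 - α - β) * (1 - ζ) / Z * Q
      = (a * b * (1 - α - β) / Z) * ((1 - ζ) * Q) := by ring
    _ ≤ (a * b * (1 - α - β) / Z) * (Q - P) := by gcongr; linarith

theorem strict_alignment_improvement_general {d : ℕ} (M : Matrix (Fin d) (Fin d) ℝ)
    (hM : M.PosDef) (gcore gnoise : Fin d → ℝ)
    (ε α β ζ : ℝ) (hε0 : 0 < ε) (hε1 : ε < 1) (hαβ : α + β < 1) (hζ : ζ < 1)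
    (hgcore : gcore ≠ 0)
    (hcoh : gcore ⬝ᵥ M⁻¹ *ᵥ gnoise ≤ ζ * (gcore ⬝ᵥ M⁻¹ *ᵥ gcore))
    (a b : ℝ) (ha : a = 1 - ε) (hb : b = ε)
    (Zfil : ℝ) (hZfil : Zfil = a * (1 - α) + b * β) (hZpos : 0 < Zfil)
    (Atrain Afil : ℝ)
    (hAtrain : Atrain = a * (gcore ⬝ᵥ M⁻¹ *ᵥ gcore) + b * (gcore ⬝ᵥ M⁻¹ *ᵥ gnoise))
    (hAfil : Afil = (a * (1 - α) / Zfil) * (gcore ⬝ᵥ M⁻¹ *ᵥ gcore)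
      + (b * β / Zfil) * (gcore ⬝ᵥ M⁻¹ *ᵥ gnoise)) :
    (a * b * (1 - α - β) * (1 - ζ) / Zfil) * (gcore ⬝ᵥ M⁻¹ *ᵥ gcore) ≤ Afil - Atrain
      ∧ 0 < (a * b * (1 - α - β) * (1 - ζ) / Zfil) * (gcore ⬝ᵥ M⁻¹ *ᵥ gcore) := by
  have hab : a + b = 1 := by rw [ha, hb]; ring
  have ha0 : 0 < a := by rw [ha]; linarith
  have hb0 : 0 < b := by rw [hb]; linarith
  have hQ : 0 < gcore ⬝ᵥ M⁻¹ *ᵥ gcore := hM.dotProduct_inv_mulVec_pos hgcore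
  refine ⟨?_, ?_⟩
  · rw [hAfil, hAtrain]
    exact le_reweighted_sub_mixture hab ha0.le hb0.le hαβ.le hZpos hZfil hcoh
  · have : 0 < 1 - α - β := by linarith
    have : 0 < 1 - ζ := by linarith
    positivity

/-- Strict alignment improvement under incoherent noise: if `0 < ε < 1`,
`α + β < 1`, `g_core ≠ 0`, and `⟨g_core,g_noise⟩_{M⁻¹} ≤ ζ ‖g_core‖²_{M⁻¹}`
with `ζ < 1`, then
`A_fil − A_train ≥ (ab(1−α−β)(1−ζ)/Z_fil) ‖g_core‖²_{M⁻¹} > 0`. -/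
theorem strict_alignment_improvement {d : ℕ} (M : Matrix (Fin d) (Fin d) ℝ)
    (hM : M.PosDef) (gcore gnoise : Fin d → ℝ)
    (ε α β ζ : ℝ) (hε0 : 0 < ε) (hε1 : ε < 1) (hα0 : 0 ≤ α) (hα1 : α ≤ 1)
    (hβ0 : 0 ≤ β) (hβ1 : β ≤ 1) (hαβ : α + β < 1) (hζ : ζ < 1)
    (hgcore : gcore ≠ 0)
    (hcoh : gcore ⬝ᵥ M⁻¹ *ᵥ gnoise ≤ ζ * (gcore ⬝ᵥ M⁻¹ *ᵥ gcore))
    (a b : ℝ) (ha : a = 1 - ε) (hb : b = ε)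
    (Zfil : ℝ) (hZfil : Zfil = a * (1 - α) + b * β) (hZpos : 0 < Zfil)
    (Atrain Afil : ℝ)
    (hAtrain : Atrain = a * (gcore ⬝ᵥ M⁻¹ *ᵥ gcore) + b * (gcore ⬝ᵥ M⁻¹ *ᵥ gnoise))
    (hAfil : Afil = (a * (1 - α) / Zfil) * (gcore ⬝ᵥ M⁻¹ *ᵥ gcore)
      + (b * β / Zfil) * (gcore ⬝ᵥ M⁻¹ *ᵥ gnoise)) :
    (a * b * (1 - α - β) * (1 - ζ) / Zfil) * (gcore ⬝ᵥ M⁻¹ *ᵥ gcore) ≤ Afil - Atrain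
      ∧ 0 < (a * b * (1 - α - β) * (1 - ζ) / Zfil) * (gcore ⬝ᵥ M⁻¹ *ᵥ gcore) :=
  strict_alignment_improvement_general M hM gcore gnoise ε α β ζ hε0 hε1 hαβ hζ hgcore hcoh a b ha
    hb Zfil hZfil hZpos Atrain Afil hAtrain hAfil
end

section
/- Robust alignment gain under bounded selection bias: with a = 1−ε, b = ε, Z_fil = a(1−α)+bβ > 0, suppose g_core^sel and g_noise^sel satisfy ‖g_core^sel − g_core‖_{M^{-1}} ≤ ρ_c‖g_core‖_{M^{-1}} and ‖g_noise^sel − g_noise‖_{M^{-1}} ≤ ρ_n‖g_core‖_{M^{-1}}, and ⟨g_core, g_noise⟩_{M^{-1}} ≤ ζ‖g_core‖²_{M^{-1}} with ζ < 1. Define A_fil^sel = (a(1−α)⟨g_core, g_core^sel⟩_{M^{-1}} + bβ⟨g_core, g_noise^sel⟩_{M^{-1}})/Z_fil and A_train = a‖g_core‖²_{M^{-1}} + b⟨g_core,g_noise⟩_{M^{-1}}. Then A_fil^sel − A_train ≥ [ab(1−α−β)(1−ζ) − a(1−α)ρ_c − bβρ_n] / Z_fil · ‖g_core‖²_{M^{-1}}.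 -/
/-!
After clearing the denominator `Z_fil > 0`, the gain splits into the unbiased part, which
(because `a + b = 1`) is exactly `ab(1 − α − β)(‖g_core‖² − ⟨g_core, g_noise⟩)` and hence at least
`ab(1 − α − β)(1 − ζ)‖g_core‖²`, plus the selection deviations
`a(1 − α)⟨g_core, g_core^sel − g_core⟩` and `bβ⟨g_core, g_noise^sel − g_noise⟩`, which
Cauchy–Schwarz for the inner product of `M⁻¹` bounds below by `−ρ_c‖g_core‖²` and `−ρ_n‖g_core‖²`
times their weights.
-/

open Matrix

namespace Matrix.PosSemidef

variable {n : Type*} [Fintype n] {N : Matrix n n ℝ}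

theorem dotProduct_mulVec_self_nonneg (hN : N.PosSemidef) (x : n → ℝ) :
    0 ≤ x ⬝ᵥ N *ᵥ x := by
  simpa only [star_trivial] using hN.dotProduct_mulVec_nonneg x

theorem dotProduct_mulVec_sq_le (hN : N.PosSemidef) (x y : n → ℝ) :
    (x ⬝ᵥ N *ᵥ y) ^ 2 ≤ (x ⬝ᵥ N *ᵥ x) * (y ⬝ᵥ N *ᵥ y) := by
  let := N.toSeminormedAddCommGroup hN
  let := N.toInnerProductSpace hN
  have hinner : ∀ u v : n → ℝ, inner ℝ u v = u ⬝ᵥ N *ᵥ v := fun u v => dotProduct_comm _ _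
  simpa only [sq, hinner] using real_inner_mul_inner_self_le x y

theorem abs_dotProduct_mulVec_le (hN : N.PosSemidef) (x y : n → ℝ) :
    |x ⬝ᵥ N *ᵥ y| ≤ √(x ⬝ᵥ N *ᵥ x) * √(y ⬝ᵥ N *ᵥ y) := by
  rw [← Real.sqrt_mul (hN.dotProduct_mulVec_self_nonneg x)]
  exact Real.abs_le_sqrt (hN.dotProduct_mulVec_sq_le x y)

theorem sub_mul_le_dotProduct_mulVec (hN : N.PosSemidef) {x y z : n → ℝ} {ρ : ℝ}
    (h : √((y - z) ⬝ᵥ N *ᵥ (y - z)) ≤ ρ * √(x ⬝ᵥ N *ᵥ x)) :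
    x ⬝ᵥ N *ᵥ z - ρ * (x ⬝ᵥ N *ᵥ x) ≤ x ⬝ᵥ N *ᵥ y := by
  have hdev : -(ρ * (x ⬝ᵥ N *ᵥ x)) ≤ x ⬝ᵥ N *ᵥ (y - z) :=
    calc -(ρ * (x ⬝ᵥ N *ᵥ x)) = -(√(x ⬝ᵥ N *ᵥ x) * (ρ * √(x ⬝ᵥ N *ᵥ x))) := by
          rw [mul_left_comm, Real.mul_self_sqrt (hN.dotProduct_mulVec_self_nonneg x)]
      _ ≤ -(√(x ⬝ᵥ N *ᵥ x) * √((y - z) ⬝ᵥ N *ᵥ (y - z))) := by gcongr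
      _ ≤ x ⬝ᵥ N *ᵥ (y - z) := neg_le_of_abs_le (hN.abs_dotProduct_mulVec_le x (y - z))
  rw [mulVec_sub, dotProduct_sub] at hdev
  linarith

end Matrix.PosSemidef

theorem filtered_sub_mixture_eq {a b : ℝ} (hab : a + b = 1) (α β c m : ℝ) :
    a * (1 - α) * c + b * β * m - (a * (1 - α) + b * β) * (a * c + b * m)
      = a * b * (1 - α - β) * (c - m) := by
  obtain rfl : b = 1 - a := by linarith
  ring

theorem robust_alignment_gain_general {d : ℕ} (M : Matrix (Fin d) (Fin d) ℝ)
    (hM : M.PosDef) (gcore gnoise gcoreSel gnoiseSel : Fin d → ℝ)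
    (ε α β ζ ρc ρn : ℝ) (hε0 : 0 < ε) (hε1 : ε < 1)
    (hα1 : α ≤ 1) (hβ0 : 0 ≤ β) (hαβ : α + β < 1)
    (a b : ℝ) (ha : a = 1 - ε) (hb : b = ε)
    (Zfil : ℝ) (hZfil : Zfil = a * (1 - α) + b * β) (hZpos : 0 < Zfil)
    (hbiasC : Real.sqrt ((gcoreSel - gcore) ⬝ᵥ M⁻¹ *ᵥ (gcoreSel - gcore))
      ≤ ρc * Real.sqrt (gcore ⬝ᵥ M⁻¹ *ᵥ gcore))
    (hbiasN : Real.sqrt ((gnoiseSel - gnoise) ⬝ᵥ M⁻¹ *ᵥ (gnoiseSel - gnoise))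
      ≤ ρn * Real.sqrt (gcore ⬝ᵥ M⁻¹ *ᵥ gcore))
    (hcoh : gcore ⬝ᵥ M⁻¹ *ᵥ gnoise ≤ ζ * (gcore ⬝ᵥ M⁻¹ *ᵥ gcore))
    (Atrain AfilSel : ℝ)
    (hAtrain : Atrain = a * (gcore ⬝ᵥ M⁻¹ *ᵥ gcore) + b * (gcore ⬝ᵥ M⁻¹ *ᵥ gnoise))
    (hAfilSel : AfilSel = (a * (1 - α) * (gcore ⬝ᵥ M⁻¹ *ᵥ gcoreSel)
      + b * β * (gcore ⬝ᵥ M⁻¹ *ᵥ gnoiseSel)) / Zfil) :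
    (a * b * (1 - α - β) * (1 - ζ) - a * (1 - α) * ρc - b * β * ρn) / Zfil
        * (gcore ⬝ᵥ M⁻¹ *ᵥ gcore)
      ≤ AfilSel - Atrain := by
  have ha0 : 0 ≤ a := by linarith
  have hb0 : 0 ≤ b := by linarith
  have hMinv : (M⁻¹).PosSemidef := hM.inv.posSemidef
  have hcore := mul_le_mul_of_nonneg_left (hMinv.sub_mul_le_dotProduct_mulVec hbiasC)
    (mul_nonneg ha0 (sub_nonneg.2 hα1))
  have hnoise := mul_le_mul_of_nonneg_left (hMinv.sub_mul_le_dotProduct_mulVec hbiasN)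
    (mul_nonneg hb0 hβ0)
  have hcohWeighted := mul_le_mul_of_nonneg_left hcoh
    (mul_nonneg (mul_nonneg ha0 hb0) (by linarith : 0 ≤ 1 - α - β))
  have hgain := filtered_sub_mixture_eq (a := a) (b := b) (by rw [ha, hb]; ring) α β
    (gcore ⬝ᵥ M⁻¹ *ᵥ gcore) (gcore ⬝ᵥ M⁻¹ *ᵥ gnoise)
  rw [← hZfil] at hgain
  rw [hAfilSel, hAtrain, div_mul_eq_mul_div, div_sub' hZpos.ne']
  gcongr
  linear_combination hcore + hnoise + hcohWeighted - hgain

/-- Robust alignment gain under bounded selection bias. -/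
theorem robust_alignment_gain {d : ℕ} (M : Matrix (Fin d) (Fin d) ℝ)
    (hM : M.PosDef) (gcore gnoise gcoreSel gnoiseSel : Fin d → ℝ)
    (ε α β ζ ρc ρn : ℝ) (hε0 : 0 < ε) (hε1 : ε < 1)
    (hα0 : 0 ≤ α) (hα1 : α ≤ 1) (hβ0 : 0 ≤ β) (hβ1 : β ≤ 1) (hαβ : α + β < 1)
    (hζ : ζ < 1) (hρc : 0 ≤ ρc) (hρn : 0 ≤ ρn)
    (a b : ℝ) (ha : a = 1 - ε) (hb : b = ε)
    (Zfil : ℝ) (hZfil : Zfil = a * (1 - α) + b * β) (hZpos : 0 < Zfil)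
    (hbiasC : Real.sqrt ((gcoreSel - gcore) ⬝ᵥ M⁻¹ *ᵥ (gcoreSel - gcore))
      ≤ ρc * Real.sqrt (gcore ⬝ᵥ M⁻¹ *ᵥ gcore))
    (hbiasN : Real.sqrt ((gnoiseSel - gnoise) ⬝ᵥ M⁻¹ *ᵥ (gnoiseSel - gnoise))
      ≤ ρn * Real.sqrt (gcore ⬝ᵥ M⁻¹ *ᵥ gcore))
    (hcoh : gcore ⬝ᵥ M⁻¹ *ᵥ gnoise ≤ ζ * (gcore ⬝ᵥ M⁻¹ *ᵥ gcore))
    (Atrain AfilSel : ℝ)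
    (hAtrain : Atrain = a * (gcore ⬝ᵥ M⁻¹ *ᵥ gcore) + b * (gcore ⬝ᵥ M⁻¹ *ᵥ gnoise))
    (hAfilSel : AfilSel = (a * (1 - α) * (gcore ⬝ᵥ M⁻¹ *ᵥ gcoreSel)
      + b * β * (gcore ⬝ᵥ M⁻¹ *ᵥ gnoiseSel)) / Zfil) :
    (a * b * (1 - α - β) * (1 - ζ) - a * (1 - α) * ρc - b * β * ρn) / Zfil
        * (gcore ⬝ᵥ M⁻¹ *ᵥ gcore)
      ≤ AfilSel - Atrain :=
  robust_alignment_gain_general M hM gcore gnoise gcoreSel gnoiseSel ε α β ζ ρc ρn hε0 hε1 hα1 hβ0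
    hαβ a b ha hb Zfil hZfil hZpos hbiasC hbiasN hcoh Atrain AfilSel hAtrain hAfilSel
end
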